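/- arXiv:1610.02611 — 3 statements merged into one kernel-verified Lean document; each statement's English description precedes it below -/
import Mathlib

section
/- There exist constants c₂ > c₁ > 0 and a natural number N such that for all n ≥ N, c₁ · n · log n ≤ ∫_0^∞ F_n(w) dw ≤ c₂ · n · log n, where F_n is the first-intensity integrand of the naive-model random harmonic polynomial with m = n after the change of variables w = |z|². -/
open Finset MeasureTheory Filter Real

/-- `aP k w = ∑_{j=0}^k w^j` -/
noncomputable def aP (k : ℕ) (w : ℝ) : ℝ := ∑ j ∈ range (k + 1), w ^ j

/-- `bP k w = ∑_{j=1}^k j w^j` -/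
noncomputable def bP (k : ℕ) (w : ℝ) : ℝ := ∑ j ∈ range (k + 1), (j : ℝ) * w ^ j

/-- `cP k w = ∑_{j=1}^k j² w^j` -/
noncomputable def cP (k : ℕ) (w : ℝ) : ℝ := ∑ j ∈ range (k + 1), (j : ℝ) ^ 2 * w ^ j

/-- The first-intensity integrand for the naive model with `m = n`,
after the change of variables `w = |z|²`. -/
noncomputable def F (n : ℕ) (w : ℝ) : ℝ :=
  Real.sqrt (aP n w * cP n w * (aP n w * cP n w - bP n w ^ 2)) / (2 * w * aP n w ^ 2)

/-!
Weight `j ∈ {0, …, n}` by `w ^ j` and let `μ`, `σ²` be the mean and variance of `j`, so that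
`F n w = σ √(μ² + σ²) / (2 w)`. Telescoping gives the exact identity
`(1 - w)² σ² = w - (n + 1)² w ^ (n + 1) / aP n w ²`. Hence `σ² ≤ w / (1 - w)²` for every `w`,
and `σ² ≥ w / (2 (w - 1)²)` once `(n + 1)(w - 1)` is large, because then
`aP n w ≈ w ^ (n + 1) / (w - 1)`. Together with `μ ≤ w / (1 - w)` for `w < 1`, `n / 2 ≤ μ` for
`w ≥ 1` and `μ² + σ² ≤ n² min(1, w)`, this bounds `F` by `1 / (1 - w)²` up to `1 - 1/n`, by
`n² / 2` up to `1 + 1/n`, by `n / (2 (w - 1))` up to `2` and by `n w ^ (-3/2)` beyond, and from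
below by `n / (8 (w - 1))` on `[1 + 64/n, 2]`. Only `1 + O(1/n) ≤ w ≤ 2` contributes `n log n`;
the rest is `O(n)`.
-/

namespace ExpectedZeros

variable {n : ℕ} {w : ℝ}

lemma aP_succ (n : ℕ) (w : ℝ) : aP (n + 1) w = aP n w + w ^ (n + 1) := sum_range_succ _ _

lemma bP_succ (n : ℕ) (w : ℝ) : bP (n + 1) w = bP n w + (n + 1 : ℕ) * w ^ (n + 1) :=
  sum_range_succ _ _

lemma cP_succ (n : ℕ) (w : ℝ) :
    cP (n + 1) w = cP n w + ((n + 1 : ℕ) : ℝ) ^ 2 * w ^ (n + 1) :=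
  sum_range_succ _ _

lemma one_sub_mul_aP (n : ℕ) (w : ℝ) : (1 - w) * aP n w = 1 - w ^ (n + 1) := by
  induction n with
  | zero => simp [aP]
  | succ n ih => rw [aP_succ]; linear_combination ih

lemma one_sub_mul_bP (n : ℕ) (w : ℝ) :
    (1 - w) * bP n w + (n + 1) * w ^ (n + 1) = w * aP n w := by
  induction n with
  | zero => simp [aP, bP]
  | succ n ih => rw [bP_succ, aP_succ]; push_cast; linear_combination ih

lemma one_sub_mul_cP (n : ℕ) (w : ℝ) :
    (1 - w) * cP n w + n ^ 2 * w ^ (n + 1) + aP n w = 2 * bP n w + 1 := by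
  induction n with
  | zero => simp [aP, bP, cP]
  | succ n ih => rw [cP_succ, bP_succ, aP_succ]; push_cast; linear_combination ih

lemma sq_one_sub_mul_aP_mul_cP_sub_sq (n : ℕ) (w : ℝ) :
    (1 - w) ^ 2 * (aP n w * cP n w - bP n w ^ 2) = w * aP n w ^ 2 - (n + 1) ^ 2 * w ^ (n + 1) := by
  linear_combination (-(1 - w) * aP n w - (n + 1) ^ 2 * w ^ (n + 1)) * one_sub_mul_aP n w
    + (2 * aP n w - (1 - w) * bP n w - w * aP n w + (n + 1) * w ^ (n + 1)) * one_sub_mul_bP n w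
    + (1 - w) * aP n w * one_sub_mul_cP n w

lemma one_le_aP (hw : 0 ≤ w) : 1 ≤ aP n w := by
  simpa [aP] using single_le_sum (fun j _ => pow_nonneg hw j) (mem_range.2 n.succ_pos)
    (f := fun j => w ^ j)

lemma aP_pos (hw : 0 ≤ w) : 0 < aP n w := one_pos.trans_le (one_le_aP hw)

lemma sq_bP_le_aP_mul_cP (hw : 0 ≤ w) : bP n w ^ 2 ≤ aP n w * cP n w :=
  sum_sq_le_sum_mul_sum_of_sq_le_mul _ (fun j _ => pow_nonneg hw j)
    (fun j _ => by positivity) (fun j _ => by ring_nf; rfl)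

lemma cP_le_sq_mul_aP (hw : 0 ≤ w) : cP n w ≤ n ^ 2 * aP n w := by
  rw [cP, aP, mul_sum]
  gcongr with j hj
  exact_mod_cast Nat.lt_succ_iff.1 (mem_range.1 hj)

/-- The factor `w` comes from the vanishing `j = 0` term of `cP`. -/
lemma cP_le_sq_mul_mul_aP (hw : 0 ≤ w) : cP n w ≤ n ^ 2 * w * aP n w := by
  rw [cP, sum_range_succ', aP, mul_sum]
  calc ∑ j ∈ range n, ((j + 1 : ℕ) : ℝ) ^ 2 * w ^ (j + 1) + (0 : ℕ) ^ 2 * w ^ 0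
      ≤ ∑ j ∈ range n, (n : ℝ) ^ 2 * w * w ^ j := by
        simp only [Nat.cast_zero, zero_pow two_ne_zero, zero_mul, add_zero]
        refine sum_le_sum fun j hj => ?_
        have hj : ((j + 1 : ℕ) : ℝ) ^ 2 ≤ (n : ℝ) ^ 2 := by
          gcongr; exact_mod_cast mem_range.1 hj
        rw [show w ^ (j + 1) = w * w ^ j from pow_succ' w j,
          show (n : ℝ) ^ 2 * w * w ^ j = (n : ℝ) ^ 2 * (w * w ^ j) by ring]
        gcongr
    _ ≤ ∑ j ∈ range (n + 1), (n : ℝ) ^ 2 * w * w ^ j :=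
        sum_le_sum_of_subset_of_nonneg (range_subset_range.2 n.le_succ)
          fun j _ _ => by positivity

/-- Chebyshev's sum inequality for the increasing sequences `j` and `w ^ j`. -/
lemma mul_aP_le_two_mul_bP (hw : 1 ≤ w) : n * aP n w ≤ 2 * bP n w := by
  have h := ((Monotone.monovary (f := fun j : ℕ => (j : ℝ)) Nat.mono_cast
    (pow_right_mono₀ hw)).monovaryOn (range (n + 1))).sum_mul_sum_le_card_mul_sum
  have hsum : (∑ j ∈ range (n + 1), (j : ℝ)) * 2 = (n + 1) * n := by
    have h2 := congrArg (Nat.cast (R := ℝ)) (sum_range_id_mul_two (n + 1))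
    push_cast [Nat.add_sub_cancel] at h2
    exact h2
  simp only [card_range, Nat.cast_succ] at h
  have key : ((n : ℝ) + 1) * (n * aP n w) ≤ ((n : ℝ) + 1) * (2 * bP n w) :=
    calc ((n : ℝ) + 1) * (n * aP n w) = 2 * ((∑ j ∈ range (n + 1), (j : ℝ)) * aP n w) := by
          linear_combination (-aP n w) * hsum
      _ ≤ 2 * ((n + 1) * bP n w) := mul_le_mul_of_nonneg_left h zero_le_two
      _ = ((n : ℝ) + 1) * (2 * bP n w) := by ring
  exact le_of_mul_le_mul_left key (by positivity)

/-- Mean and variance of `j` under the probability weights `w ^ j / aP n w` on `{0, …, n}`. -/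
noncomputable def mean (n : ℕ) (w : ℝ) : ℝ := bP n w / aP n w

noncomputable def variance (n : ℕ) (w : ℝ) : ℝ := cP n w / aP n w - mean n w ^ 2

lemma variance_eq (hw : 0 ≤ w) :
    variance n w = (aP n w * cP n w - bP n w ^ 2) / aP n w ^ 2 := by
  have := (aP_pos hw (n := n)).ne'
  rw [variance, mean]
  field_simp

lemma variance_nonneg (hw : 0 ≤ w) : 0 ≤ variance n w := by
  rw [variance_eq hw]
  exact div_nonneg (sub_nonneg.2 (sq_bP_le_aP_mul_cP hw)) (sq_nonneg _)

lemma variance_le_cP_div_aP : variance n w ≤ cP n w / aP n w :=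
  sub_le_self _ (sq_nonneg _)

lemma mean_nonneg (hw : 0 ≤ w) : 0 ≤ mean n w :=
  div_nonneg (sum_nonneg fun j _ => by positivity) (aP_pos hw).le

lemma half_le_mean (hw : 1 ≤ w) : n / 2 ≤ mean n w := by
  rw [mean, le_div_iff₀ (aP_pos (zero_le_one.trans hw))]
  linarith [mul_aP_le_two_mul_bP (n := n) hw]

lemma one_sub_mul_mean_le (hw : 0 ≤ w) : (1 - w) * mean n w ≤ w := by
  rw [mean, mul_div_assoc', div_le_iff₀ (aP_pos hw)]
  have : 0 ≤ ((n : ℝ) + 1) * w ^ (n + 1) := by positivity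
  linarith [one_sub_mul_bP n w]

lemma sq_one_sub_mul_variance_le (hw : 0 ≤ w) : (1 - w) ^ 2 * variance n w ≤ w := by
  have ha := aP_pos hw (n := n)
  rw [variance_eq hw, mul_div_assoc', div_le_iff₀ (by positivity),
    sq_one_sub_mul_aP_mul_cP_sub_sq]
  have : 0 ≤ ((n : ℝ) + 1) ^ 2 * w ^ (n + 1) := by positivity
  linarith

lemma half_le_sq_sub_one_mul_variance (hw : 1 ≤ w)
    (ha : 2 * (n + 1) ^ 2 * w ^ (n + 1) ≤ aP n w ^ 2) : w / 2 ≤ (w - 1) ^ 2 * variance n w := by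
  have ha0 := aP_pos (n := n) (zero_le_one.trans hw)
  rw [variance_eq (zero_le_one.trans hw), mul_div_assoc', le_div_iff₀ (by positivity),
    show (w - 1) ^ 2 = (1 - w) ^ 2 by ring, sq_one_sub_mul_aP_mul_cP_sub_sq]
  nlinarith

lemma cP_div_aP_le_sq (hw : 0 ≤ w) : cP n w / aP n w ≤ n ^ 2 :=
  div_le_of_le_mul₀ (aP_pos hw).le (by positivity) (cP_le_sq_mul_aP hw)

lemma cP_div_aP_le_sq_mul (hw : 0 ≤ w) : cP n w / aP n w ≤ n ^ 2 * w :=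
  div_le_of_le_mul₀ (aP_pos hw).le (by positivity) (cP_le_sq_mul_mul_aP hw)

lemma sq_one_sub_mul_cP_div_aP_le (hw0 : 0 ≤ w) (hw1 : w ≤ 1) :
    (1 - w) ^ 2 * (cP n w / aP n w) ≤ 2 * w := by
  have hμ : 0 ≤ (1 - w) * mean n w := mul_nonneg (by linarith) (mean_nonneg hw0)
  have hμ' : ((1 - w) * mean n w) ^ 2 ≤ w := by
    nlinarith [one_sub_mul_mean_le (n := n) hw0]
  have hsplit : (1 - w) ^ 2 * (cP n w / aP n w)
      = ((1 - w) * mean n w) ^ 2 + (1 - w) ^ 2 * variance n w := by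
    rw [variance]; ring
  linarith [sq_one_sub_mul_variance_le (n := n) hw0]

/-- As `(w - 1) * aP n w = w ^ (n + 1) - 1`, it suffices that `8 s ^ 2 ≤ w ^ (n + 1)` for
`s = (n + 1) * (w - 1)`; and `w ^ (n + 1) ≥ exp (s / 2)` on `[1, 2]` since `log w ≥ 1 - w⁻¹`. -/
lemma two_mul_sq_mul_pow_le_sq_aP (hw2 : w ≤ 2) (hs : 64 ≤ (n + 1) * (w - 1)) :
    2 * (n + 1) ^ 2 * w ^ (n + 1) ≤ aP n w ^ 2 := by
  set s := ((n : ℝ) + 1) * (w - 1)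
  set T := w ^ (n + 1)
  have hw1 : 0 < w - 1 := pos_of_mul_pos_right (by linarith : 0 < s) (by positivity)
  have hw0 : 0 < w := by linarith
  have hlog : s / 2 ≤ (n + 1) * Real.log w := by
    have h := Real.one_sub_inv_le_log_of_pos hw0
    have : s / 2 ≤ (n + 1) * (1 - w⁻¹) := by
      rw [show (1 : ℝ) - w⁻¹ = (w - 1) / w by field_simp, mul_div_assoc', le_div_iff₀ hw0]
      nlinarith
    exact this.trans (by gcongr)
  have hT : 8 * s ^ 2 ≤ T := by
    have hexp : T = Real.exp ((n + 1) * Real.log w) := by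
      rw [← Nat.cast_succ, Real.exp_nat_mul, Real.exp_log hw0]
    have h4 := Real.pow_div_factorial_le_exp (s / 2) (by linarith) 4
    rw [hexp]
    refine le_trans ?_ (h4.trans (Real.exp_le_exp.2 hlog))
    rw [show (4 : ℕ).factorial = 24 by rfl]
    have : 0 ≤ s ^ 2 * (s ^ 2 - 3072) := mul_nonneg (sq_nonneg s) (by nlinarith)
    push_cast
    nlinarith
  have haw : T / 2 ≤ aP n w * (w - 1) := by
    have : 2 ≤ T := by nlinarith
    linarith [one_sub_mul_aP n w]
  have key : 2 * (n + 1) ^ 2 * T * (w - 1) ^ 2 ≤ aP n w ^ 2 * (w - 1) ^ 2 := by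
    nlinarith [pow_le_pow_left₀ (by positivity) haw 2]
  exact le_of_mul_le_mul_right key (by positivity)

lemma F_nonneg (hw : 0 ≤ w) : 0 ≤ F n w :=
  div_nonneg (Real.sqrt_nonneg _) (by positivity)

lemma F_eq (hw : 0 ≤ w) : F n w = √(cP n w / aP n w * variance n w) / (2 * w) := by
  have ha := aP_pos hw (n := n)
  have h : cP n w / aP n w * variance n w
      = aP n w * cP n w * (aP n w * cP n w - bP n w ^ 2) / (aP n w ^ 2) ^ 2 := by
    rw [variance_eq hw]; field_simp
  rw [F, h, Real.sqrt_div' _ (by positivity), Real.sqrt_sq (by positivity), div_div,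
    mul_comm (aP n w ^ 2)]

lemma F_le_of_le_sq {X : ℝ} (hw : 0 < w) (hX : 0 ≤ X)
    (h : cP n w / aP n w * variance n w ≤ (2 * w * X) ^ 2) : F n w ≤ X := by
  rw [F_eq hw.le, div_le_iff₀ (by positivity), Real.sqrt_le_left (by positivity)]
  linarith

lemma le_F_of_sq_le {X : ℝ} (hw : 0 < w)
    (h : (2 * w * X) ^ 2 ≤ cP n w / aP n w * variance n w) : X ≤ F n w := by
  rw [F_eq hw.le, le_div_iff₀ (by positivity)]
  exact (le_abs_self _).trans (Real.abs_le_sqrt (by linarith))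

lemma F_le_cP_div_aP (hw : 0 < w) : F n w ≤ cP n w / aP n w / (2 * w) := by
  have hM : 0 ≤ cP n w / aP n w := (variance_nonneg hw.le).trans variance_le_cP_div_aP
  refine F_le_of_le_sq hw (by positivity) ?_
  rw [mul_div_cancel₀ _ (by positivity), sq]
  exact mul_le_mul_of_nonneg_left variance_le_cP_div_aP hM

lemma F_le_sq_div_two (hw : 0 < w) : F n w ≤ n ^ 2 / 2 := by
  refine (F_le_cP_div_aP hw).trans ?_
  rw [div_le_iff₀ (by positivity)]
  linarith [cP_div_aP_le_sq_mul (n := n) hw.le]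

lemma F_le_of_lt_one (hw0 : 0 < w) (hw1 : w < 1) : F n w ≤ 1 / (1 - w) ^ 2 := by
  refine (F_le_cP_div_aP hw0).trans ?_
  rw [div_le_div_iff₀ (by positivity) (by nlinarith)]
  linarith [sq_one_sub_mul_cP_div_aP_le (n := n) hw0.le hw1.le]

lemma variance_le_of_one_lt (hw : 1 < w) : variance n w ≤ w / (w - 1) ^ 2 := by
  rw [le_div_iff₀ (by nlinarith), mul_comm, show (w - 1) ^ 2 = (1 - w) ^ 2 by ring]
  exact sq_one_sub_mul_variance_le (by linarith)

lemma F_le_of_one_lt (hw : 1 < w) : F n w ≤ n / (2 * (w - 1)) := by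
  have hw1 : 0 < w - 1 := by linarith
  refine F_le_of_le_sq (by linarith) (by positivity) ?_
  calc cP n w / aP n w * variance n w ≤ n ^ 2 * (w / (w - 1) ^ 2) :=
        mul_le_mul (cP_div_aP_le_sq (by linarith)) (variance_le_of_one_lt hw)
          (variance_nonneg (by linarith)) (by positivity)
    _ ≤ n ^ 2 * (w ^ 2 / (w - 1) ^ 2) := by gcongr; nlinarith
    _ = (2 * w * (n / (2 * (w - 1)))) ^ 2 := by field_simp

lemma F_le_of_two_le (hw : 2 ≤ w) : F n w ≤ n * w ^ (-(3 / 2 : ℝ)) := by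
  have hw0 : 0 < w := by linarith
  have hrpow : (w ^ (-(3 / 2 : ℝ))) ^ 2 = 1 / w ^ 3 := by
    rw [← Real.rpow_natCast, ← Real.rpow_mul hw0.le,
      show -(3 / 2 : ℝ) * ((2 : ℕ) : ℝ) = -((3 : ℕ) : ℝ) by norm_num, Real.rpow_neg hw0.le,
      Real.rpow_natCast, one_div]
  refine F_le_of_le_sq hw0 (by positivity) ?_
  calc cP n w / aP n w * variance n w ≤ n ^ 2 * (w / (w - 1) ^ 2) :=
        mul_le_mul (cP_div_aP_le_sq hw0.le) (variance_le_of_one_lt (by linarith))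
          (variance_nonneg hw0.le) (by positivity)
    _ ≤ n ^ 2 * (4 / w) := by
        refine mul_le_mul_of_nonneg_left ?_ (by positivity)
        rw [div_le_div_iff₀ (by nlinarith) hw0]
        nlinarith
    _ = (2 * w * (n * w ^ (-(3 / 2 : ℝ)))) ^ 2 := by
        rw [mul_pow, mul_pow, mul_pow, hrpow]; field_simp; ring

lemma div_le_F (hw2 : w ≤ 2) (hs : 64 ≤ (n + 1) * (w - 1)) : n / (8 * (w - 1)) ≤ F n w := by
  have hw1 : 0 < w - 1 := pos_of_mul_pos_right (a := (n : ℝ) + 1) (by linarith) (by positivity)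
  have hw0 : 0 < w := by linarith
  have hμ : (n / 2 : ℝ) ^ 2 ≤ mean n w ^ 2 := by
    gcongr
    exact half_le_mean (by linarith)
  have hV : w / (2 * (w - 1) ^ 2) ≤ variance n w := by
    rw [div_le_iff₀ (by positivity)]
    linarith [half_le_sq_sub_one_mul_variance (by linarith) (two_mul_sq_mul_pow_le_sq_aP hw2 hs)]
  refine le_F_of_sq_le hw0 ?_
  calc (2 * w * (n / (8 * (w - 1)))) ^ 2 ≤ (n / 2) ^ 2 * (w / (2 * (w - 1) ^ 2)) := by
        field_simp
        nlinarith [sq_nonneg (n : ℝ)]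
    _ ≤ mean n w ^ 2 * variance n w := mul_le_mul hμ hV (by positivity) (sq_nonneg _)
    _ ≤ cP n w / aP n w * variance n w := by
        gcongr
        · exact variance_nonneg hw0.le
        · have := variance_nonneg (n := n) hw0.le
          unfold variance at this
          linarith

open Set intervalIntegral

lemma continuousOn_F : ContinuousOn (F n) (Ioi 0) := by
  have ha : Continuous (aP n) := by unfold aP; fun_prop
  have hb : Continuous (bP n) := by unfold bP; fun_prop
  have hc : Continuous (cP n) := by unfold cP; fun_prop
  unfold F
  refine ContinuousOn.div (by fun_prop) (by fun_prop) fun w (hw : 0 < w) => ?_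
  have := aP_pos (n := n) hw.le
  positivity

lemma integrableOn_F : IntegrableOn (F n) (Ioi 0) := by
  rw [← Ioc_union_Ioi_eq_Ioi zero_le_two]
  refine IntegrableOn.union ?_ ?_
  · refine IntegrableOn.of_bound measure_Ioc_lt_top
      ((continuousOn_F.mono Ioc_subset_Ioi_self).aestronglyMeasurable measurableSet_Ioc)
      (n ^ 2 / 2)
      (ae_restrict_of_forall_mem measurableSet_Ioc fun w hw => ?_)
    rw [Real.norm_of_nonneg (F_nonneg hw.1.le)]
    exact F_le_sq_div_two hw.1
  · refine Integrable.mono'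
      ((integrableOn_Ioi_rpow_of_lt (a := -(3 / 2)) (by norm_num) two_pos).const_mul n)
      ((continuousOn_F.mono (Ioi_subset_Ioi zero_le_two)).aestronglyMeasurable measurableSet_Ioi)
      (ae_restrict_of_forall_mem measurableSet_Ioi fun w hw => ?_)
    rw [Real.norm_of_nonneg (F_nonneg (zero_le_two.trans hw.le))]
    exact F_le_of_two_le (le_of_lt hw)

lemma integrableOn_F_Icc {a b : ℝ} (ha : 0 ≤ a) : IntegrableOn (F n) (Icc a b) :=
  ((integrableOn_Ici_iff_integrableOn_Ioi (f := F n) (b := 0) (μ := volume)).2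
    integrableOn_F).mono_set fun _ hx => ha.trans hx.1

lemma intervalIntegrable_F {a b : ℝ} (ha : 0 ≤ a) (hab : a ≤ b) :
    IntervalIntegrable (F n) volume a b :=
  (intervalIntegrable_iff_integrableOn_Icc_of_le hab).2 (integrableOn_F_Icc ha)

lemma integral_F_Ioi_two_le : ∫ w in Ioi 2, F n w ≤ 2 * n := by
  have hI := (integrableOn_Ioi_rpow_of_lt (by norm_num : -(3 / 2 : ℝ) < -1) two_pos).const_mul n
  calc ∫ w in Ioi 2, F n w ≤ ∫ w in Ioi (2 : ℝ), n * w ^ (-(3 / 2 : ℝ)) :=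
        setIntegral_mono_on (integrableOn_F.mono_set (Ioi_subset_Ioi zero_le_two)) hI
          measurableSet_Ioi fun w hw => F_le_of_two_le (le_of_lt hw)
    _ = n * (2 * 2 ^ (-(1 / 2 : ℝ))) := by
        rw [MeasureTheory.integral_const_mul, integral_Ioi_rpow_of_lt (by norm_num) two_pos]
        congr 1
        norm_num
        ring
    _ ≤ 2 * n := by
        have : (2 : ℝ) ^ (-(1 / 2 : ℝ)) ≤ 1 :=
          Real.rpow_le_one_of_one_le_of_nonpos one_le_two (by norm_num)
        nlinarith [(Nat.cast_nonneg n : (0 : ℝ) ≤ n)]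

lemma integral_F_below_one_le {δ : ℝ} (hδ0 : 0 < δ) (hδ1 : δ ≤ 1) :
    ∫ w in (0 : ℝ)..1 - δ, F n w ≤ δ⁻¹ - 1 := by
  have h := integral_le_sub_of_hasDeriv_right_of_le (g := fun w => (1 - w)⁻¹)
    (g' := fun w => 1 / (1 - w) ^ 2) (φ := F n) (a := 0) (b := 1 - δ) (sub_nonneg.2 hδ1)
    (ContinuousOn.inv₀ (by fun_prop) fun w hw => by linarith [hw.2])
    (fun w hw => ((((hasDerivAt_id' w).const_sub 1).inv (by linarith [hw.2])).congr_deriv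
      (by ring)).hasDerivWithinAt)
    (integrableOn_F_Icc le_rfl) (fun w hw => F_le_of_lt_one hw.1 (by linarith [hw.2]))
  simpa using h

lemma integral_F_near_one_le {δ : ℝ} (hδ0 : 0 < δ) (hδ1 : δ ≤ 1) :
    ∫ w in 1 - δ..1 + δ, F n w ≤ n ^ 2 * δ := by
  have h := integral_le_sub_of_hasDeriv_right_of_le (g := fun w => n ^ 2 / 2 * w)
    (g' := fun _ => n ^ 2 / 2) (φ := F n) (a := 1 - δ) (b := 1 + δ) (by linarith) (by fun_prop)
    (fun w _ => by simpa using ((hasDerivAt_id' w).const_mul (n ^ 2 / 2 : ℝ)).hasDerivWithinAt)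
    (integrableOn_F_Icc (by linarith)) (fun w hw => F_le_sq_div_two (by linarith [hw.1]))
  linarith

lemma integral_F_above_one_le {δ : ℝ} (hδ0 : 0 < δ) (hδ1 : δ ≤ 1) :
    ∫ w in 1 + δ..2, F n w ≤ -(n / 2 * Real.log δ) := by
  have h := integral_le_sub_of_hasDeriv_right_of_le (g := fun w => n / 2 * Real.log (w - 1))
    (g' := fun w => n / 2 * (1 / (w - 1))) (φ := F n) (a := 1 + δ) (b := 2) (by linarith)
    (continuousOn_const.mul (ContinuousOn.log (by fun_prop) fun w hw => by linarith [hw.1]))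
    (fun w hw => ((((hasDerivAt_id' w).sub_const 1).log (by linarith [hw.1])).const_mul
      _).hasDerivWithinAt)
    (integrableOn_F_Icc (by linarith))
    (fun w hw => (F_le_of_one_lt (by linarith [hw.1])).trans_eq (by rw [mul_one_div, div_div]))
  norm_num at h
  linarith

lemma neg_mul_log_le_integral_F {δ : ℝ} (hδ0 : 0 < δ) (hδ1 : δ ≤ 1) (hs : 64 ≤ (n + 1) * δ) :
    -(n / 8 * Real.log δ) ≤ ∫ w in 1 + δ..2, F n w := by
  have h := sub_le_integral_of_hasDeriv_right_of_le (g := fun w => n / 8 * Real.log (w - 1))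
    (g' := fun w => n / 8 * (1 / (w - 1))) (φ := F n) (a := 1 + δ) (b := 2) (by linarith)
    (continuousOn_const.mul (ContinuousOn.log (by fun_prop) fun w hw => by linarith [hw.1]))
    (fun w hw => ((((hasDerivAt_id' w).sub_const 1).log (by linarith [hw.1])).const_mul
      _).hasDerivWithinAt)
    (integrableOn_F_Icc (by linarith)) fun w hw => by
      rw [mul_one_div, div_div]
      exact div_le_F hw.2.le (hs.trans (by gcongr; linarith [hw.1]))
  norm_num at h
  linarith

lemma integral_Ioi_F_eq {δ : ℝ} (hδ0 : 0 < δ) (hδ1 : δ ≤ 1) :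
    ∫ w in Ioi 0, F n w = (∫ w in (0 : ℝ)..1 - δ, F n w) + (∫ w in 1 - δ..1 + δ, F n w)
      + (∫ w in 1 + δ..2, F n w) + ∫ w in Ioi 2, F n w := by
  rw [← Ioc_union_Ioi_eq_Ioi zero_le_two, setIntegral_union (Ioc_disjoint_Ioi le_rfl)
    measurableSet_Ioi (integrableOn_F.mono_set Ioc_subset_Ioi_self)
    (integrableOn_F.mono_set (Ioi_subset_Ioi zero_le_two)), ← integral_of_le zero_le_two,
    integral_add_adjacent_intervals (intervalIntegrable_F le_rfl (by linarith))
      (intervalIntegrable_F (by linarith) (by linarith)),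
    integral_add_adjacent_intervals (intervalIntegrable_F le_rfl (by linarith))
      (intervalIntegrable_F (by linarith) (by linarith))]

lemma integral_F_le_integral_Ioi {a b : ℝ} (ha : 0 < a) (hab : a ≤ b) :
    ∫ w in a..b, F n w ≤ ∫ w in Ioi 0, F n w := by
  rw [integral_of_le hab]
  exact setIntegral_mono_set integrableOn_F
    (ae_restrict_of_forall_mem measurableSet_Ioi fun w hw => F_nonneg (le_of_lt hw))
    (Eventually.of_forall fun w hw => ha.trans hw.1 : Ioc a b ≤ᵐ[volume] Ioi 0)

lemma integral_F_le (hn : 1 ≤ n) : ∫ w in Ioi 0, F n w ≤ n / 2 * Real.log n + 4 * n := by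
  have hn0 : (1 : ℝ) ≤ n := by exact_mod_cast hn
  have hδ0 : (0 : ℝ) < (n : ℝ)⁻¹ := by positivity
  have hδ1 : (n : ℝ)⁻¹ ≤ 1 := inv_le_one_of_one_le₀ hn0
  have h1 := integral_F_below_one_le (n := n) hδ0 hδ1
  have h2 := integral_F_near_one_le (n := n) hδ0 hδ1
  have h3 := integral_F_above_one_le (n := n) hδ0 hδ1
  rw [inv_inv] at h1
  rw [sq, mul_assoc, mul_inv_cancel₀ (by positivity), mul_one] at h2
  rw [Real.log_inv] at h3
  rw [integral_Ioi_F_eq hδ0 hδ1]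
  linarith [integral_F_Ioi_two_le (n := n)]

lemma le_integral_F (hn : 64 ≤ n) :
    n / 8 * (Real.log n - Real.log 64) ≤ ∫ w in Ioi 0, F n w := by
  have hn0 : (64 : ℝ) ≤ n := by exact_mod_cast hn
  have hδ0 : (0 : ℝ) < 64 / n := by positivity
  have hδ1 : 64 / (n : ℝ) ≤ 1 := by rw [div_le_one (by positivity)]; exact hn0
  have hs : 64 ≤ ((n : ℝ) + 1) * (64 / n) := by
    rw [mul_div_assoc', le_div_iff₀ (by positivity)]; linarith
  calc n / 8 * (Real.log n - Real.log 64) = -(n / 8 * Real.log (64 / n)) := by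
        rw [Real.log_div (by norm_num) (by positivity)]; ring
    _ ≤ ∫ w in 1 + 64 / n..2, F n w := neg_mul_log_le_integral_F hδ0 hδ1 hs
    _ ≤ ∫ w in Ioi 0, F n w := integral_F_le_integral_Ioi (by positivity) (by linarith)

end ExpectedZeros

/-- When `m = n`, the expected number of zeros is of order `n log n`:
there are constants `c₂ > c₁ > 0` bounding `∫_0^∞ Fₙ(w) dw / (n log n)`
for all sufficiently large `n`. -/
theorem expectedZeros_order_nlogn :
    ∃ c₁ c₂ : ℝ, 0 < c₁ ∧ c₁ < c₂ ∧ ∃ N : ℕ, ∀ n : ℕ, N ≤ n →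
      c₁ * (n * Real.log n) ≤ ∫ w in Set.Ioi (0 : ℝ), F n w ∧
      (∫ w in Set.Ioi (0 : ℝ), F n w) ≤ c₂ * (n * Real.log n) := by
  refine ⟨1 / 16, 1, by norm_num, by norm_num, 2 ^ 12, fun n hn => ?_⟩
  have hnR : (2 : ℝ) ^ 12 ≤ n := by exact_mod_cast hn
  have hlog : 12 * Real.log 2 ≤ Real.log n := by
    rw [show (12 : ℝ) * Real.log 2 = Real.log (2 ^ 12) by rw [Real.log_pow]; norm_num]
    exact Real.log_le_log (by positivity) hnR
  have hlog2 := Real.log_two_gt_d9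
  have hn0 : (0 : ℝ) ≤ n := n.cast_nonneg
  constructor
  · have h64 : Real.log 64 = 6 * Real.log 2 := by
      rw [show (64 : ℝ) = 2 ^ 6 by norm_num, Real.log_pow]; norm_num
    calc 1 / 16 * (n * Real.log n) ≤ n / 8 * (Real.log n - Real.log 64) := by
          nlinarith [mul_nonneg hn0 (sub_nonneg.2 hlog)]
      _ ≤ _ := ExpectedZeros.le_integral_F (le_trans (by norm_num) hn)
  · calc (∫ w in Set.Ioi (0 : ℝ), F n w) ≤ n / 2 * Real.log n + 4 * n :=
          ExpectedZeros.integral_F_le (le_trans (by norm_num) hn)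
      _ ≤ 1 * (n * Real.log n) := by nlinarith [mul_nonneg hn0 (sub_nonneg.2 hlog)]
end

section
/- Let n ≥ 1 be a natural number. For every real w > 0 with w ≠ 1, with a_n(w) = Σ_{j=0}^n w^j, b_n(w) = Σ_{j=1}^n j w^j, c_n(w) = Σ_{j=1}^n j² w^j, one has (a_n(w) c_n(w) − b_n(w)²)/(w a_n(w)²) = (1/(w−1)²) · (1 − (n+1)² w^n / a_n(w)²). -/
open Finset

/-! Multiplying by `(w - 1)⁴` turns `aₖcₖ - bₖ²` into a polynomial in `w` and `w^(k+1)` via the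
closed forms of the three sums; comparing it with `(w - 1)⁴ aₖ² = (w^(k+1) - 1)²` gives the
polynomial identity `(w - 1)² (aₖcₖ - bₖ²) = w aₖ² - (k+1)² w^(k+1)`, which is the theorem after
dividing by `(w - 1)² w aₖ²`. -/

lemma aP_pos (k : ℕ) {w : ℝ} (hw : 0 ≤ w) : 0 < aP k w :=
  geom_sum_pos hw k.succ_ne_zero

lemma aP_mul_sub_one (k : ℕ) (w : ℝ) : aP k w * (w - 1) = w ^ (k + 1) - 1 :=
  geom_sum_mul w (k + 1)

lemma sub_one_sq_mul_bP (k : ℕ) (w : ℝ) :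
    (w - 1) ^ 2 * bP k w = k * w ^ (k + 2) - (k + 1) * w ^ (k + 1) + w := by
  induction k with
  | zero => simp [bP]
  | succ m ih =>
    rw [bP, sum_range_succ, ← bP]
    push_cast
    linear_combination ih

lemma sub_one_pow_three_mul_cP (k : ℕ) (w : ℝ) :
    (w - 1) ^ 3 * cP k w = k ^ 2 * w ^ (k + 3) - (2 * k ^ 2 + 2 * k - 1) * w ^ (k + 2)
      + (k + 1) ^ 2 * w ^ (k + 1) - w ^ 2 - w := by
  induction k with
  | zero => simp [cP]
  | succ m ih =>
    rw [cP, sum_range_succ, ← cP]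
    push_cast
    linear_combination ih

lemma sub_one_sq_mul_aP_mul_cP_sub_bP_sq (k : ℕ) {w : ℝ} (hw1 : w ≠ 1) :
    (w - 1) ^ 2 * (aP k w * cP k w - bP k w ^ 2) = w * aP k w ^ 2 - (k + 1) ^ 2 * w ^ (k + 1) := by
  have ha := aP_mul_sub_one k w
  have hb := sub_one_sq_mul_bP k w
  have hc := sub_one_pow_three_mul_cP k w
  refine mul_left_cancel₀ (pow_ne_zero 2 (sub_ne_zero.2 hw1)) ?_
  linear_combination (w - 1) ^ 3 * cP k w * ha + (w ^ (k + 1) - 1) * hc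
    - ((w - 1) ^ 2 * bP k w + (k * w ^ (k + 2) - (k + 1) * w ^ (k + 1) + w)) * hb
    - w * (aP k w * (w - 1) + (w ^ (k + 1) - 1)) * ha

theorem key_identity_general (n : ℕ) (w : ℝ) (hw : 0 < w) (hw1 : w ≠ 1) :
    (aP n w * cP n w - bP n w ^ 2) / (w * aP n w ^ 2) =
      (1 / (w - 1) ^ 2) * (1 - ((n : ℝ) + 1) ^ 2 * w ^ n / aP n w ^ 2) := by
  have ha := (aP_pos n hw.le).ne'
  field_simp
  linear_combination sub_one_sq_mul_aP_mul_cP_sub_bP_sq n hw1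

/-- For `w > 0`, `w ≠ 1`:
`(aₙcₙ − bₙ²)/(w aₙ²) = (1/(w−1)²)(1 − (n+1)² wⁿ/aₙ²)`. -/
theorem key_identity (n : ℕ) (hn : 1 ≤ n) (w : ℝ) (hw : 0 < w) (hw1 : w ≠ 1) :
    (aP n w * cP n w - bP n w ^ 2) / (w * aP n w ^ 2) =
      (1 / (w - 1) ^ 2) * (1 - ((n : ℝ) + 1) ^ 2 * w ^ n / aP n w ^ 2) :=
  key_identity_general n w hw hw1
end

section
/- Let n ≥ 1 be a natural number and let a_n(w) = Σ_{j=0}^n w^j and c_n(w) = Σ_{j=1}^n j² w^j. Then c_n(w) ≤ n² a_n(w) for all real w > 0, and c_n(w) ≥ (1/16) n² a_n(w) for all real w > 1. -/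
open Finset

/-!
The upper bound is termwise, since `j² ≤ n²`. For the lower bound with `w ≥ 1`, the powers
`w^j` increase, so the upper half `j ≥ (n + 1) / 2` of the geometric sum carries at least half
of it; on that half `j² ≥ n² / 4`, which gives even `n² aₙ(w) ≤ 8 cₙ(w)`.
-/

theorem cP_le_sq_mul_aP (n : ℕ) {w : ℝ} (hw : 0 ≤ w) : cP n w ≤ (n : ℝ) ^ 2 * aP n w := by
  rw [cP, aP, mul_sum]
  refine sum_le_sum fun j hj => mul_le_mul_of_nonneg_right ?_ (pow_nonneg hw j)
  have hjn : j ≤ n := Nat.lt_succ_iff.mp (mem_range.mp hj)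
  gcongr

theorem sum_range_pow_le_two_mul_sum_Ico_half {R : Type*} [Semiring R] [PartialOrder R]
    [IsOrderedRing R] (k : ℕ) {w : R} (hw : 1 ≤ w) :
    ∑ j ∈ range k, w ^ j ≤ 2 * ∑ j ∈ Ico (k / 2) k, w ^ j := by
  set m := k / 2
  have hlow : ∑ j ∈ range m, w ^ j ≤ ∑ j ∈ Ico m k, w ^ j :=
    calc ∑ j ∈ range m, w ^ j
        ≤ ∑ j ∈ range m, w ^ (m + j) :=
          sum_le_sum fun j _ => pow_le_pow_right₀ hw (Nat.le_add_left j m)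
      _ = ∑ j ∈ Ico m (m + m), w ^ j := by rw [sum_Ico_eq_sum_range, Nat.add_sub_cancel]
      _ ≤ ∑ j ∈ Ico m k, w ^ j :=
          sum_le_sum_of_subset_of_nonneg (Ico_subset_Ico le_rfl (by omega))
            fun j _ _ => pow_nonneg (zero_le_one.trans hw) j
  rw [range_eq_Ico, ← sum_Ico_consecutive _ (Nat.zero_le m) (Nat.div_le_self k 2),
    ← range_eq_Ico, two_mul]
  exact add_le_add_left hlow _

theorem sq_mul_aP_le_eight_mul_cP (n : ℕ) {w : ℝ} (hw : 1 ≤ w) :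
    (n : ℝ) ^ 2 * aP n w ≤ 8 * cP n w := by
  set m := (n + 1) / 2
  have hw0 : 0 ≤ w := zero_le_one.trans hw
  have hhalf : (n : ℝ) ^ 2 * ∑ j ∈ Ico m (n + 1), w ^ j
      ≤ 4 * ∑ j ∈ Ico m (n + 1), (j : ℝ) ^ 2 * w ^ j := by
    rw [mul_sum, mul_sum]
    refine sum_le_sum fun j hj => ?_
    have hnj : (n : ℝ) ≤ 2 * j := by exact_mod_cast (show n ≤ 2 * j by simp at hj; omega)
    have hsq : (n : ℝ) ^ 2 ≤ 4 * (j : ℝ) ^ 2 := by nlinarith [Nat.cast_nonneg (α := ℝ) n]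
    rw [← mul_assoc]
    exact mul_le_mul_of_nonneg_right hsq (pow_nonneg hw0 j)
  have htop : ∑ j ∈ Ico m (n + 1), (j : ℝ) ^ 2 * w ^ j ≤ cP n w := by
    rw [cP, range_eq_Ico]
    exact sum_le_sum_of_subset_of_nonneg (Ico_subset_Ico (Nat.zero_le m) le_rfl)
      fun j _ _ => by positivity
  have hgeom := sum_range_pow_le_two_mul_sum_Ico_half (n + 1) hw
  calc (n : ℝ) ^ 2 * aP n w
      ≤ (n : ℝ) ^ 2 * (2 * ∑ j ∈ Ico m (n + 1), w ^ j) := by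
        rw [aP]; exact mul_le_mul_of_nonneg_left hgeom (by positivity)
    _ ≤ 8 * cP n w := by linarith

theorem c_div_a_bounds_general (n : ℕ) :
    (∀ w : ℝ, 0 < w → cP n w ≤ (n : ℝ) ^ 2 * aP n w) ∧
      (∀ w : ℝ, 1 < w → (1 / 16) * ((n : ℝ) ^ 2 * aP n w) ≤ cP n w) := by
  refine ⟨fun w hw => cP_le_sq_mul_aP n hw.le, fun w hw => ?_⟩
  have hbound := sq_mul_aP_le_eight_mul_cP n hw.le
  have hcP : 0 ≤ cP n w := sum_nonneg fun j _ => by positivity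
  linarith

/-- For `n ≥ 1`: `cₙ(w) ≤ n² aₙ(w)` for all `w > 0`, and
`cₙ(w) ≥ n² aₙ(w)/16` for all `w > 1`. -/
theorem c_div_a_bounds (n : ℕ) (hn : 1 ≤ n) :
    (∀ w : ℝ, 0 < w → cP n w ≤ (n : ℝ) ^ 2 * aP n w) ∧
      (∀ w : ℝ, 1 < w → (1 / 16) * ((n : ℝ) ^ 2 * aP n w) ≤ cP n w) :=
  c_div_a_bounds_general n
end
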